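/- arXiv:1909.06517 — 10 statements merged into one kernel-verified Lean document; each statement's English description precedes it below -/
import Mathlib

section
/- Let s ≥ 2 be an integer. If n > β·g_{s−1}·g_{s−2}, then there exist positive integers a, b with n = a·g_{s−1} + β·b·g_{s−2}; equivalently, there is an (α,β)-walk w with w_s = n (so s(n) ≥ s). -/
/-! Writing `x = g (s - 1)` and `y = β * g (s - 2)`, the recurrence makes `x` and `y` coprime
(a common prime factor of `g (k + 2)` and `β * g (k + 1)` would divide `β * g k`, or `α` and `β`).
So the claim is the positive form of the two-coin Frobenius problem: every `n > x * y` is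
`a * x + b * y` with `a, b ≥ 1`, because `n - x - y ≥ (x - 1) * (y - 1)` is representable
with `a, b ≥ 0`. -/

theorem Nat.exists_pos_mul_add_mul_eq_of_coprime {x y n : ℕ} (hco : x.Coprime y)
    (hn : x * y < n) : ∃ a b : ℕ, 1 ≤ a ∧ 1 ≤ b ∧ n = a * x + b * y := by
  have hle : x.pred * y.pred + (x + y) ≤ n := by
    rcases x with _ | x
    · obtain rfl : y = 1 := Nat.coprime_zero_left y |>.mp hco
      simpa [Nat.one_le_iff_ne_zero, Nat.pos_iff_ne_zero] using hn
    rcases y with _ | y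
    · obtain rfl : x = 0 := by simpa using hco
      simpa [Nat.one_le_iff_ne_zero, Nat.pos_iff_ne_zero] using hn
    simp only [Nat.pred_succ]
    nlinarith
  obtain ⟨a, b, hab⟩ := Nat.exists_add_mul_eq_of_gcd_dvd_of_mul_pred_le x y (n - (x + y))
    (by simp [hco.gcd_eq_one]) (by omega)
  exact ⟨a + 1, b + 1, by omega, by omega, by rw [add_mul, add_mul]; omega⟩

theorem coprime_apply_succ_mul_apply {α β : ℕ} (hco : α.Coprime β) {g : ℕ → ℕ} (hg1 : g 1 = 1)
    (hgrec : ∀ k, g (k + 2) = α * g (k + 1) + β * g k) (m : ℕ) :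
    (g (m + 1)).Coprime (β * g m) := by
  induction m with
  | zero => simp [hg1]
  | succ k ih =>
    have hβ : (g (k + 2)).Coprime β := by
      rw [hgrec k, mul_comm β, Nat.coprime_add_mul_right_left]
      exact hco.mul_left (ih.coprime_dvd_right (dvd_mul_right β _))
    have hg : (g (k + 2)).Coprime (g (k + 1)) := by
      rw [hgrec k, add_comm, mul_comm α, Nat.coprime_add_mul_left_left]
      exact ih.symm
    exact hβ.mul_right hg

theorem stmt_7_general (α β : ℕ) (hco : Nat.Coprime α β)
    (g : ℕ → ℕ) (hg1 : g 1 = 1)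
    (hgrec : ∀ k, g (k + 2) = α * g (k + 1) + β * g k)
    (s n : ℕ) (hs : 2 ≤ s) (hn : n > β * g (s - 1) * g (s - 2)) :
    ∃ a b : ℕ, 1 ≤ a ∧ 1 ≤ b ∧ n = a * g (s - 1) + β * b * g (s - 2) := by
  obtain ⟨k, rfl⟩ : ∃ k, s = k + 2 := ⟨s - 2, by omega⟩
  simp only [show k + 2 - 1 = k + 1 by omega, Nat.add_sub_cancel] at hn ⊢
  obtain ⟨a, b, ha, hb, hab⟩ := Nat.exists_pos_mul_add_mul_eq_of_coprime
    (coprime_apply_succ_mul_apply hco hg1 hgrec k) (n := n) (by linarith)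
  exact ⟨a, b, ha, hb, by rw [hab]; ring⟩

theorem stmt_7 (α β : ℕ) (hα : 1 ≤ α) (hβ : 1 ≤ β) (hco : Nat.Coprime α β)
    (g : ℕ → ℕ) (hg0 : g 0 = 0) (hg1 : g 1 = 1)
    (hgrec : ∀ k, g (k + 2) = α * g (k + 1) + β * g k)
    (s n : ℕ) (hs : 2 ≤ s) (hn : n > β * g (s - 1) * g (s - 2)) :
    ∃ a b : ℕ, 1 ≤ a ∧ 1 ≤ b ∧ n = a * g (s - 1) + β * b * g (s - 2) :=
  stmt_7_general α β hco g hg1 hgrec s n hs hn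
end

section
/- Suppose n = a·g_{s−1} + β·b·g_{s−2} with a, b ≥ 1 and s > 2, where s = s(n) is maximal (no a', b' ≥ 1 satisfy n = a'·g_s + β·b'·g_{s−1}). Then for every ℓ ≥ 0, a − α·b − ℓ·g_s is not a positive multiple of β. -/
/-! If `a - α b - ℓ g_s = β m` with `m ≥ 1`, then substituting `a = α b + ℓ g_s + β m` and
`g_s = α g_{s-1} + β g_{s-2}` rewrites `n = a g_{s-1} + β b g_{s-2}` as
`n = (b + ℓ g_{s-1}) g_s + β m g_{s-1}`, a representation one level higher, contradicting the
maximality of `s`. -/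

theorem recurrence_of_two_le {α β : ℕ} {g : ℕ → ℕ}
    (hgrec : ∀ k, g (k + 2) = α * g (k + 1) + β * g k) {s : ℕ} (hs : 2 ≤ s) :
    g s = α * g (s - 1) + β * g (s - 2) := by
  obtain ⟨k, rfl⟩ := Nat.exists_eq_add_of_le' hs
  simpa using hgrec k

theorem shift_representation {R : Type*} [CommSemiring R] {α β x y z a b ℓ m : R}
    (hz : z = α * y + β * x) (ha : a = α * b + ℓ * z + β * m) :
    a * y + β * b * x = (b + ℓ * y) * z + β * m * y := by
  subst ha
  rw [hz]
  ring

theorem stmt_8_general (α β : ℕ)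
    (g : ℕ → ℕ)
    (hgrec : ∀ k, g (k + 2) = α * g (k + 1) + β * g k)
    (n a b s : ℕ) (hb : 1 ≤ b) (hs : 2 < s)
    (hrep : n = a * g (s - 1) + β * b * g (s - 2))
    (hmax : ¬ ∃ a' b' : ℕ, 1 ≤ a' ∧ 1 ≤ b' ∧ n = a' * g s + β * b' * g (s - 1)) :
    ∀ ℓ : ℕ, ¬ ∃ m : ℕ, 1 ≤ m ∧ (a : ℤ) - α * b - ℓ * g s = β * m := by
  rintro ℓ ⟨m, hm, hdiff⟩
  have ha : a = α * b + ℓ * g s + β * m := by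
    have : (a : ℤ) = α * b + ℓ * g s + β * m := by linarith
    exact_mod_cast this
  refine hmax ⟨b + ℓ * g (s - 1), m, by omega, hm, ?_⟩
  rw [hrep]
  exact shift_representation (recurrence_of_two_le hgrec hs.le) ha

theorem stmt_8 (α β : ℕ) (hα : 1 ≤ α) (hβ : 1 ≤ β) (hco : Nat.Coprime α β)
    (g : ℕ → ℕ) (hg0 : g 0 = 0) (hg1 : g 1 = 1)
    (hgrec : ∀ k, g (k + 2) = α * g (k + 1) + β * g k)
    (n a b s : ℕ) (ha : 1 ≤ a) (hb : 1 ≤ b) (hs : 2 < s)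
    (hrep : n = a * g (s - 1) + β * b * g (s - 2))
    (hmax : ¬ ∃ a' b' : ℕ, 1 ≤ a' ∧ 1 ≤ b' ∧ n = a' * g s + β * b' * g (s - 1)) :
    ∀ ℓ : ℕ, ¬ ∃ m : ℕ, 1 ≤ m ∧ (a : ℤ) - α * b - ℓ * g s = β * m :=
  stmt_8_general α β g hgrec n a b s hb hs hrep hmax
end

section
/- Let s = s(n) > 2 and let (b, a) be positive integers with n = a·g_{s−1} + β·b·g_{s−2} (an n-good pair). Then a ≤ (β−1)·g_s + α·b. -/
/-!
Put `t = a - α b`. If `t > (β - 1) g_s`, then, since `g_s` is coprime to `β`, the Frobenius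
bound for the pair `(g_s, β)` writes `t = ℓ g_s + β c` with `c ≥ 1`. The recurrence
`g_s = α g_{s-1} + β g_{s-2}` then turns the pair `(b, a)` into the pair `(b + ℓ g_{s-1}, c)`
representing `n` at level `s + 1`, contradicting the maximality of `s`.
-/

/-- The Frobenius bound for the pair `(m, β)`, applied to `t - β`. -/
theorem Nat.Coprime.exists_eq_mul_add_mul_of_mul_lt {m β t : ℕ} (hco : Nat.Coprime m β)
    (ht : (β - 1) * m < t) : ∃ ℓ c, 0 < c ∧ t = ℓ * m + β * c := by
  have hle : β ≤ t ∧ m.pred * β.pred ≤ t - β := by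
    rcases m with _ | p
    · simp_all [Nat.Coprime]
      omega
    rcases β with _ | q
    · simp
    simp only [Nat.pred_succ, Nat.add_sub_cancel, Nat.mul_succ, mul_comm p q] at ht ⊢
    omega
  obtain ⟨ℓ, c, h⟩ := Nat.exists_add_mul_eq_of_gcd_dvd_of_mul_pred_le m β (t - β)
    (by simp [hco.gcd_eq_one]) hle.2
  exact ⟨ℓ, c + 1, c.succ_pos, by rw [mul_add_one, mul_comm β]; omega⟩

theorem coprime_of_recurrence {α β : ℕ} (hco : Nat.Coprime α β) {g : ℕ → ℕ} (hg1 : g 1 = 1)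
    (hgrec : ∀ k, g (k + 2) = α * g (k + 1) + β * g k) (k : ℕ) :
    Nat.Coprime (g (k + 1)) β := by
  induction k with
  | zero => simp [hg1]
  | succ k ih =>
    rw [hgrec, mul_comm β]
    exact (Nat.coprime_add_mul_right_left _ _ _).mpr (hco.mul_left ih)

theorem stmt_11_general (α β : ℕ) (hco : Nat.Coprime α β)
    (g : ℕ → ℕ) (hg1 : g 1 = 1)
    (hgrec : ∀ k, g (k + 2) = α * g (k + 1) + β * g k)
    (n a b s : ℕ) (hb : 1 ≤ b) (hs : 2 < s)
    (hrep : n = a * g (s - 1) + β * b * g (s - 2))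
    (hmax : ¬ ∃ a' b' : ℕ, 1 ≤ a' ∧ 1 ≤ b' ∧ n = a' * g s + β * b' * g (s - 1)) :
    a ≤ (β - 1) * g s + α * b := by
  obtain ⟨k, rfl⟩ : ∃ k, s = k + 2 := ⟨s - 2, by omega⟩
  simp only [Nat.add_sub_cancel, show k + 2 - 1 = k + 1 from rfl] at hrep hmax
  by_contra! hlt
  have hcop : Nat.Coprime (g (k + 2)) β := coprime_of_recurrence hco hg1 hgrec (k + 1)
  obtain ⟨ℓ, c, hc, ht⟩ := hcop.exists_eq_mul_add_mul_of_mul_lt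
    (show (β - 1) * g (k + 2) < a - α * b by omega)
  refine hmax ⟨b + ℓ * g (k + 1), c, by omega, hc, ?_⟩
  rw [hrep, show a = α * b + ℓ * g (k + 2) + β * c by omega, hgrec k]
  ring

theorem stmt_11 (α β : ℕ) (hα : 1 ≤ α) (hβ : 1 ≤ β) (hco : Nat.Coprime α β)
    (g : ℕ → ℕ) (hg0 : g 0 = 0) (hg1 : g 1 = 1)
    (hgrec : ∀ k, g (k + 2) = α * g (k + 1) + β * g k)
    (n a b s : ℕ) (ha : 1 ≤ a) (hb : 1 ≤ b) (hs : 2 < s)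
    (hrep : n = a * g (s - 1) + β * b * g (s - 2))
    (hmax : ¬ ∃ a' b' : ℕ, 1 ≤ a' ∧ 1 ≤ b' ∧ n = a' * g s + β * b' * g (s - 1)) :
    a ≤ (β - 1) * g s + α * b :=
  stmt_11_general α β hco g hg1 hgrec n a b s hb hs hrep hmax
end

section
/- Suppose n = a·g_t + β·b·g_{t−1} with t ≥ 2, a ≤ (β−1)·g_{t+1} + α·b, b ≤ g_t, and a − α·b − ℓ·g_{t+1} is not a positive multiple of β for any ℓ ≥ 0. Then s(n) = t + 1; i.e., there exist no positive integers a', b' with n = a'·g_{t+1} + β·b'·g_t. -/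
/-!
Since `g (t + 1) = α g t + β g (t - 1)`, equating the two representations of `n` gives
`β g (t - 1) (a' - b) = g t (a - α a' - β b')`. Consecutive terms are coprime and every term
after `g 0` is coprime to `β`, so `g t ∣ a' - b`, i.e. `a' = b + m g t` for an integer `m`.
If `m < 0` then `a' ≤ b - g t ≤ 0`; if `m ≥ 0` then `a - α b - m g (t + 1) = β b'` with `b' ≥ 1`.
-/

namespace LucasSequence

variable {α β : ℕ} {g : ℕ → ℕ} (hg1 : g 1 = 1)
  (hgrec : ∀ k, g (k + 2) = α * g (k + 1) + β * g k)
include hg1 hgrec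

theorem coprime_succ_right (hco : Nat.Coprime α β) (k : ℕ) : Nat.Coprime (g (k + 1)) β := by
  induction k with
  | zero => simp [hg1]
  | succ k ih =>
    rw [hgrec]
    exact (Nat.coprime_add_mul_left_left _ β _).2 (hco.mul_left ih)

theorem coprime_succ_self (hco : Nat.Coprime α β) (k : ℕ) : Nat.Coprime (g (k + 1)) (g k) := by
  induction k with
  | zero => simp [hg1]
  | succ k ih =>
    rw [hgrec, add_comm, mul_comm α]
    exact (Nat.coprime_add_mul_left_left _ _ α).2
      ((coprime_succ_right hg1 hgrec hco k).symm.mul_left ih.symm)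

theorem exists_shift_of_eq (hco : Nat.Coprime α β) {k a b a' b' : ℕ} (hk : g (k + 1) ≠ 0)
    (h : a * g (k + 1) + β * b * g k = a' * g (k + 2) + β * b' * g (k + 1)) :
    ∃ m : ℤ, (a' : ℤ) = b + m * g (k + 1) ∧ (a : ℤ) - α * b - m * g (k + 2) = β * b' := by
  rw [hgrec] at h ⊢
  have hZ : ((β : ℤ) * g k) * (a' - b) = g (k + 1) * (a - α * a' - β * b') := by
    have := congrArg (Nat.cast : ℕ → ℤ) h
    push_cast at this
    linear_combination -this
  have hcop : IsCoprime (g (k + 1) : ℤ) (β * g k) := by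
    exact_mod_cast Nat.isCoprime_iff_coprime.2
      ((coprime_succ_right hg1 hgrec hco k).mul_right (coprime_succ_self hg1 hgrec hco k))
  obtain ⟨m, hm⟩ := hcop.dvd_of_dvd_mul_left ⟨_, hZ⟩
  have hquot : (β : ℤ) * g k * m = a - α * a' - β * b' := by
    refine mul_left_cancel₀ (Int.natCast_ne_zero.2 hk) ?_
    linear_combination hZ - (β : ℤ) * g k * hm
  exact ⟨m, by linear_combination hm, by push_cast; linear_combination -hquot + α * hm⟩

end LucasSequence

open LucasSequence in
theorem stmt_12_general (α β : ℕ) (hco : Nat.Coprime α β)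
    (g : ℕ → ℕ) (hg1 : g 1 = 1)
    (hgrec : ∀ k, g (k + 2) = α * g (k + 1) + β * g k)
    (n a b t : ℕ) (hb : 1 ≤ b) (ht : 2 ≤ t)
    (hrep : n = a * g t + β * b * g (t - 1))
    (hbg : b ≤ g t)
    (hdiv : ∀ ℓ : ℕ, ¬ ∃ m : ℕ, 1 ≤ m ∧ (a : ℤ) - α * b - ℓ * g (t + 1) = β * m) :
    ¬ ∃ a' b' : ℕ, 1 ≤ a' ∧ 1 ≤ b' ∧ n = a' * g (t + 1) + β * b' * g t := by
  rintro ⟨a', b', ha', hb', hrep'⟩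
  obtain ⟨k, rfl⟩ : ∃ k, t = k + 1 := ⟨t - 1, by omega⟩
  obtain ⟨m, ha'm, hb'm⟩ := exists_shift_of_eq hg1 hgrec hco (by omega)
    (hrep.symm.trans hrep')
  rcases lt_or_ge m 0 with hm | hm
  · have : (b : ℤ) ≤ g (k + 1) := by exact_mod_cast hbg
    nlinarith
  · lift m to ℕ using hm
    exact hdiv m ⟨b', hb', hb'm⟩

theorem stmt_12 (α β : ℕ) (hα : 1 ≤ α) (hβ : 1 ≤ β) (hco : Nat.Coprime α β)
    (g : ℕ → ℕ) (hg0 : g 0 = 0) (hg1 : g 1 = 1)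
    (hgrec : ∀ k, g (k + 2) = α * g (k + 1) + β * g k)
    (n a b t : ℕ) (ha : 1 ≤ a) (hb : 1 ≤ b) (ht : 2 ≤ t)
    (hrep : n = a * g t + β * b * g (t - 1))
    (hab : a ≤ (β - 1) * g (t + 1) + α * b) (hbg : b ≤ g t)
    (hdiv : ∀ ℓ : ℕ, ¬ ∃ m : ℕ, 1 ≤ m ∧ (a : ℤ) - α * b - ℓ * g (t + 1) = β * m) :
    ¬ ∃ a' b' : ℕ, 1 ≤ a' ∧ 1 ≤ b' ∧ n = a' * g (t + 1) + β * b' * g t :=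
  stmt_12_general α β hco g hg1 hgrec n a b t hb ht hrep hbg hdiv
end

section
/- Let s = s(n) > 2 with canonical representation n = a·g_{s−1} + β·b·g_{s−2} (a, b as in the characterization theorem, with b ≤ g_{s−1}). Then |w_{s+1}(b, a) − γ·n| = |λ^{s−1}·(γ·b − a)| ≤ 2·β^s, where γ, λ are the roots of x² = αx + β. -/
/-!
With `γ`, `λ` the roots of `x² = αx + β`, the Binet-type identity `g (k+1) - γ g k = λ ^ k`
turns `w_{s+1}(b, a) - γ n` into `λ ^ (s-1) (a - γ b)`. The canonical bounds `b ≤ g (s-1)` and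
`a ≤ (β-1) g s + α b`, together with `g (k+1) ≤ γ ^ k`, give `|a - γ b| ≤ β γ ^ (s-1)`, and
`|λ| γ = β` then bounds the product by `β ^ s`.
-/

section Recurrence

variable {R : Type*} {α β : ℕ} {g : ℕ → ℕ}

theorem cast_succ_sub_mul_eq_pow [CommRing R] (hg0 : g 0 = 0) (hg1 : g 1 = 1)
    (hgrec : ∀ k, g (k + 2) = α * g (k + 1) + β * g k) {γ lam : R}
    (hsum : γ + lam = α) (hprod : γ * lam = -β) (k : ℕ) :
    (g (k + 1) : R) - γ * g k = lam ^ k := by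
  induction k with
  | zero => simp [hg0, hg1]
  | succ k ih =>
    rw [hgrec k]
    push_cast
    linear_combination lam * ih - (g (k + 1) : R) * hsum + (g k : R) * hprod

theorem cast_shift_sub_mul_eq [CommRing R] (hg0 : g 0 = 0) (hg1 : g 1 = 1)
    (hgrec : ∀ k, g (k + 2) = α * g (k + 1) + β * g k) {γ lam : R}
    (hsum : γ + lam = α) (hprod : γ * lam = -β) (a b m : ℕ) :
    ((a * g (m + 2) + β * b * g (m + 1) : ℕ) : R) - γ * ((a * g (m + 1) + β * b * g m : ℕ) : R)
      = lam ^ (m + 1) * (a - γ * b) := by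
  have hstep := cast_succ_sub_mul_eq_pow hg0 hg1 hgrec hsum hprod
  push_cast
  linear_combination (a : R) * hstep (m + 1) + (β * b : R) * hstep m + (b : R) * lam ^ m * hprod

theorem cast_succ_le_pow [CommSemiring R] [PartialOrder R] [IsOrderedRing R]
    (hg0 : g 0 = 0) (hg1 : g 1 = 1) (hgrec : ∀ k, g (k + 2) = α * g (k + 1) + β * g k)
    {γ : R} (hγsq : γ ^ 2 = α * γ + β) (hαγ : (α : R) ≤ γ) (k : ℕ) :
    (g (k + 1) : R) ≤ γ ^ k := by
  induction k using Nat.twoStepInduction with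
  | zero => simp [hg1]
  | one => simpa [hgrec 0, hg0, hg1] using hαγ
  | more k ih1 ih2 =>
    rw [hgrec (k + 1)]
    push_cast
    calc (α : R) * g (k + 2) + β * g (k + 1) ≤ α * γ ^ (k + 1) + β * γ ^ k := by gcongr
      _ = γ ^ (k + 2) := by rw [pow_add γ k 2, hγsq]; ring

theorem abs_sub_mul_le [CommRing R] [LinearOrder R] [IsStrictOrderedRing R]
    (hg0 : g 0 = 0) (hg1 : g 1 = 1) (hgrec : ∀ k, g (k + 2) = α * g (k + 1) + β * g k)
    (hβ : 1 ≤ β) {γ : R} (hγsq : γ ^ 2 = α * γ + β) (hαγ : (α : R) ≤ γ) {a b m : ℕ}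
    (hbg : b ≤ g (m + 1)) (hab : a ≤ (β - 1) * g (m + 2) + α * b) :
    |(a : R) - γ * b| ≤ β * γ ^ (m + 1) := by
  have hγ0 : 0 ≤ γ := (Nat.cast_nonneg α).trans hαγ
  have hβR : (1 : R) ≤ β := by exact_mod_cast hβ
  have hb : (b : R) ≤ γ ^ m :=
    (Nat.cast_le.mpr hbg).trans (cast_succ_le_pow hg0 hg1 hgrec hγsq hαγ m)
  have hg : (g (m + 2) : R) ≤ γ ^ (m + 1) := cast_succ_le_pow hg0 hg1 hgrec hγsq hαγ (m + 1)
  have haR : (a : R) ≤ (β - 1) * g (m + 2) + α * b := by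
    have := (Nat.cast_le (α := R)).mpr hab
    push_cast [hβ] at this
    exact this
  have hγb : γ * b ≤ γ ^ (m + 1) := by rw [pow_succ']; gcongr
  have hαb : (α : R) * b ≤ γ * b := by gcongr
  have hβg : ((β : R) - 1) * g (m + 2) ≤ (β - 1) * γ ^ (m + 1) := by gcongr
  have hβpow : γ ^ (m + 1) ≤ β * γ ^ (m + 1) := le_mul_of_one_le_left (by positivity) hβR
  have ha0 : (0 : R) ≤ a := Nat.cast_nonneg a
  rw [abs_le]
  constructor <;> linarith

end Recurrence

theorem sqrt_roots_add_and_mul {α β : ℕ} {γ lam : ℝ}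
    (hγ : γ = (α + Real.sqrt (α ^ 2 + 4 * β)) / 2)
    (hlam : lam = (α - Real.sqrt (α ^ 2 + 4 * β)) / 2) :
    γ + lam = α ∧ γ * lam = -β := by
  have hsq := Real.sq_sqrt (by positivity : (0 : ℝ) ≤ α ^ 2 + 4 * β)
  subst hγ hlam
  constructor
  · ring
  · linear_combination (-1 / 4 : ℝ) * hsq

theorem le_sqrt_root (α β : ℕ) : (α : ℝ) ≤ (α + Real.sqrt (α ^ 2 + 4 * β)) / 2 := by
  have : (α : ℝ) ≤ Real.sqrt (α ^ 2 + 4 * β) :=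
    Real.le_sqrt_of_sq_le (by linarith [(by positivity : (0 : ℝ) ≤ 4 * β)])
  linarith

theorem abs_pow_mul_le_pow {R : Type*} [CommRing R] [LinearOrder R] [IsStrictOrderedRing R]
    {β : ℕ} {γ lam x : R} (hprod : γ * lam = -β) (hγ0 : 0 ≤ γ) {m : ℕ}
    (hx : |x| ≤ β * γ ^ (m + 1)) : |lam ^ (m + 1) * x| ≤ β ^ (m + 2) := by
  have hlamγ : |lam| * γ = β := by
    rw [← abs_of_nonneg hγ0, ← abs_mul, mul_comm, hprod, abs_neg, Nat.abs_cast]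
  calc |lam ^ (m + 1) * x| = |lam| ^ (m + 1) * |x| := by rw [abs_mul, abs_pow]
    _ ≤ |lam| ^ (m + 1) * (β * γ ^ (m + 1)) := by gcongr
    _ = β ^ (m + 2) := by rw [mul_left_comm, ← mul_pow, hlamγ]; ring

theorem stmt_13_general (α β : ℕ) (hβ : 1 ≤ β)
    (g : ℕ → ℕ) (hg0 : g 0 = 0) (hg1 : g 1 = 1)
    (hgrec : ∀ k, g (k + 2) = α * g (k + 1) + β * g k)
    (γ lam : ℝ)
    (hγ : γ = (α + Real.sqrt (α ^ 2 + 4 * β)) / 2)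
    (hlam : lam = (α - Real.sqrt (α ^ 2 + 4 * β)) / 2)
    (n a b s : ℕ) (hs : 2 < s)
    (hrep : n = a * g (s - 1) + β * b * g (s - 2))
    (hbg : b ≤ g (s - 1)) (hab : a ≤ (β - 1) * g s + α * b) :
    |((a * g s + β * b * g (s - 1) : ℕ) : ℝ) - γ * n| = |lam ^ (s - 1) * (γ * b - a)| ∧
      |((a * g s + β * b * g (s - 1) : ℕ) : ℝ) - γ * n| ≤ 2 * (β : ℝ) ^ s := by
  obtain ⟨m, rfl⟩ : ∃ m, s = m + 2 := ⟨s - 2, by omega⟩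
  obtain ⟨hsum, hprod⟩ := sqrt_roots_add_and_mul hγ hlam
  have hαγ : (α : ℝ) ≤ γ := hγ ▸ le_sqrt_root α β
  have hγsq : γ ^ 2 = α * γ + β := by linear_combination γ * hsum - hprod
  subst hrep
  simp only [show m + 2 - 1 = m + 1 from rfl, Nat.add_sub_cancel] at hbg ⊢
  rw [cast_shift_sub_mul_eq hg0 hg1 hgrec hsum hprod]
  refine ⟨by rw [← neg_sub, mul_neg, abs_neg], ?_⟩
  calc _ ≤ (β : ℝ) ^ (m + 2) := abs_pow_mul_le_pow hprod ((Nat.cast_nonneg α).trans hαγ)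
          (abs_sub_mul_le hg0 hg1 hgrec hβ hγsq hαγ hbg hab)
    _ ≤ 2 * (β : ℝ) ^ (m + 2) := le_mul_of_one_le_left (by positivity) one_le_two

theorem stmt_13 (α β : ℕ) (hα : 1 ≤ α) (hβ : 1 ≤ β) (hco : Nat.Coprime α β)
    (g : ℕ → ℕ) (hg0 : g 0 = 0) (hg1 : g 1 = 1)
    (hgrec : ∀ k, g (k + 2) = α * g (k + 1) + β * g k)
    (γ lam : ℝ)
    (hγ : γ = (α + Real.sqrt (α ^ 2 + 4 * β)) / 2)
    (hlam : lam = (α - Real.sqrt (α ^ 2 + 4 * β)) / 2)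
    (n a b s : ℕ) (ha : 1 ≤ a) (hb : 1 ≤ b) (hs : 2 < s)
    (hrep : n = a * g (s - 1) + β * b * g (s - 2))
    (hmax : ¬ ∃ a' b' : ℕ, 1 ≤ a' ∧ 1 ≤ b' ∧ n = a' * g s + β * b' * g (s - 1))
    (hbg : b ≤ g (s - 1)) (hab : a ≤ (β - 1) * g s + α * b) :
    |((a * g s + β * b * g (s - 1) : ℕ) : ℝ) - γ * n| = |lam ^ (s - 1) * (γ * b - a)| ∧
      |((a * g s + β * b * g (s - 1) : ℕ) : ℝ) - γ * n| ≤ 2 * (β : ℝ) ^ s :=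
  stmt_13_general α β hβ g hg0 hg1 hgrec γ lam hγ hlam n a b s hs hrep hbg hab
end

section
/- For t ≥ 2, let n_t = β·g_t·g_{t+1}, a_t = (β−1)·g_{t+1} + α·g_t, b_t = g_t. Then n_t = a_t·g_t + β·b_t·g_{t−1}, b_t ≤ g_t, a_t ≤ (β−1)·g_{t+1} + α·b_t, and a_t − α·b_t − ℓ·g_{t+1} is not a positive multiple of β for any ℓ ≥ 0. -/
/-!
The identity is the recurrence `g (t+1) = α g t + β g (t-1)` multiplied by `g t`. For the last
claim, `a_t - α b_t - ℓ g_{t+1} = (β - 1 - ℓ) g_{t+1}`, and `g_{t+1}` is prime to `β` (the recurrence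
reduces to `g_{t+1} ≡ α g_t` modulo `β`). So `β` would divide `β - 1 - ℓ`, which would have to be
positive, yet it is smaller than `β`.
-/

theorem Nat.Coprime.coprime_linearRecurrence {α β : ℕ} (hco : Nat.Coprime α β) {g : ℕ → ℕ}
    (hg1 : g 1 = 1) (hgrec : ∀ k, g (k + 2) = α * g (k + 1) + β * g k) (n : ℕ) :
    Nat.Coprime β (g (n + 1)) := by
  induction n with
  | zero => simp [hg1]
  | succ n ih =>
    rw [hgrec]
    exact (Nat.coprime_add_mul_left_right _ _ _).mpr (hco.symm.mul_right ih)

theorem not_exists_pos_mul_eq_of_coprime {β c : ℕ} (hβ : 0 < β) (hc : Nat.Coprime β c) (ℓ : ℕ) :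
    ¬ ∃ m : ℕ, 1 ≤ m ∧ ((β : ℤ) - 1 - ℓ) * c = β * m := by
  rintro ⟨m, hm, heq⟩
  have hdvd : (β : ℤ) ∣ (β : ℤ) - 1 - ℓ :=
    (Nat.isCoprime_iff_coprime.mpr hc).dvd_of_dvd_mul_right ⟨m, heq⟩
  have hpos : 0 < (β : ℤ) - 1 - ℓ := by
    have : 0 < ((β : ℤ) - 1 - ℓ) * c := by rw [heq]; positivity
    exact pos_of_mul_pos_left this (Int.natCast_nonneg c)
  have := Int.le_of_dvd hpos hdvd
  omega

theorem stmt_14_general (α β : ℕ) (hβ : 1 ≤ β) (hco : Nat.Coprime α β)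
    (g : ℕ → ℕ) (hg0 : g 0 = 0) (hg1 : g 1 = 1)
    (hgrec : ∀ k, g (k + 2) = α * g (k + 1) + β * g k)
    (t : ℕ) :
    β * g t * g (t + 1) = ((β - 1) * g (t + 1) + α * g t) * g t + β * g t * g (t - 1) ∧
    g t ≤ g t ∧
    (β - 1) * g (t + 1) + α * g t ≤ (β - 1) * g (t + 1) + α * g t ∧
    ∀ ℓ : ℕ, ¬ ∃ m : ℕ, 1 ≤ m ∧
      (((β - 1) * g (t + 1) + α * g t : ℕ) : ℤ) - α * g t - ℓ * g (t + 1) = β * m := by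
  have hidentity :
      β * g t * g (t + 1) = ((β - 1) * g (t + 1) + α * g t) * g t + β * g t * g (t - 1) := by
    obtain ⟨b, rfl⟩ : ∃ b, β = b + 1 := ⟨β - 1, by omega⟩
    cases t with
    | zero => simp [hg0]
    | succ s => rw [hgrec s, Nat.add_sub_cancel, Nat.add_sub_cancel]; ring
  refine ⟨hidentity, le_rfl, le_rfl, fun ℓ => ?_⟩
  have hrewrite : (((β - 1) * g (t + 1) + α * g t : ℕ) : ℤ) - α * g t - ℓ * g (t + 1)
      = ((β : ℤ) - 1 - ℓ) * g (t + 1) := by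
    push_cast [Nat.cast_sub hβ]
    ring
  rw [hrewrite]
  exact not_exists_pos_mul_eq_of_coprime hβ (hco.coprime_linearRecurrence hg1 hgrec t) ℓ

theorem stmt_14 (α β : ℕ) (hα : 1 ≤ α) (hβ : 1 ≤ β) (hco : Nat.Coprime α β)
    (g : ℕ → ℕ) (hg0 : g 0 = 0) (hg1 : g 1 = 1)
    (hgrec : ∀ k, g (k + 2) = α * g (k + 1) + β * g k)
    (t : ℕ) (ht : 2 ≤ t) :
    β * g t * g (t + 1) = ((β - 1) * g (t + 1) + α * g t) * g t + β * g t * g (t - 1) ∧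
    g t ≤ g t ∧
    (β - 1) * g (t + 1) + α * g t ≤ (β - 1) * g (t + 1) + α * g t ∧
    ∀ ℓ : ℕ, ¬ ∃ m : ℕ, 1 ≤ m ∧
      (((β - 1) * g (t + 1) + α * g t : ℕ) : ℤ) - α * g t - ℓ * g (t + 1) = β * m :=
  stmt_14_general α β hβ hco g hg0 hg1 hgrec t
end

section
/- If s(n) > 2, then the number of positive-integer solutions (b, a) to n = a·g_{s(n)−1} + β·b·g_{s(n)−2} is at most α² + 2β − 1. -/
/-!
Write `P = g (s - 1)`, `Q = g (s - 2)`. Since `P` is coprime to `β * Q`, two positive representations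
`n = a * P + β * b * Q` differ by a multiple of `(b, a) ↦ (b + P, a - β * Q)`. So if there are more
than `K = α ^ 2 + 2 * β - 1` of them, the one with the smallest `b` has `b ≤ P` and `a > K * β * Q`.
Adding a suitable `j * P` with `j < β` to `b` then turns it into a positive representation
`n = a' * g s + β * b' * g (s - 1)`, so `s` was not the largest level.
-/

section LucasSequence

variable {α β : ℕ} {g : ℕ → ℕ}

theorem lucas_succ_pos (hα : 0 < α) (hg1 : g 1 = 1)
    (hgrec : ∀ k, g (k + 2) = α * g (k + 1) + β * g k) : ∀ k, 0 < g (k + 1)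
  | 0 => by rw [hg1]; exact one_pos
  | k + 1 => by
    rw [hgrec]
    exact Nat.add_pos_left (Nat.mul_pos hα (lucas_succ_pos hα hg1 hgrec k)) _

theorem lucas_succ_coprime_right (hαβ : Nat.Coprime α β) (hg1 : g 1 = 1)
    (hgrec : ∀ k, g (k + 2) = α * g (k + 1) + β * g k) : ∀ k, Nat.Coprime (g (k + 1)) β
  | 0 => by rw [hg1]; exact Nat.coprime_one_left β
  | k + 1 => by
    rw [hgrec, Nat.coprime_add_mul_left_left]
    exact hαβ.mul_left (lucas_succ_coprime_right hαβ hg1 hgrec k)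

theorem lucas_coprime_succ (hαβ : Nat.Coprime α β) (hg1 : g 1 = 1)
    (hgrec : ∀ k, g (k + 2) = α * g (k + 1) + β * g k) :
    ∀ k, Nat.Coprime (g (k + 2)) (g (k + 1))
  | 0 => by rw [hg1]; exact Nat.coprime_one_right _
  | k + 1 => by
    rw [hgrec (k + 1), add_comm, Nat.coprime_add_mul_right_left]
    exact (lucas_succ_coprime_right hαβ hg1 hgrec (k + 1)).symm.mul_left
      (lucas_coprime_succ hαβ hg1 hgrec k).symm

theorem mul_lucas_le_succ (hg0 : g 0 = 0)
    (hgrec : ∀ k, g (k + 2) = α * g (k + 1) + β * g k) : ∀ k, α * g k ≤ g (k + 1)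
  | 0 => by simp [hg0]
  | _ + 1 => by rw [hgrec]; exact Nat.le_add_right _ _

end LucasSequence

theorem Int.exists_lt_dvd_sub_mul_of_isCoprime {m c : ℤ} (hm : 0 < m) (hc : IsCoprime c m)
    (x : ℤ) : ∃ j : ℤ, 0 ≤ j ∧ j < m ∧ m ∣ x - j * c := by
  obtain ⟨u, w, huw⟩ := hc
  refine ⟨u * x % m, Int.emod_nonneg _ hm.ne', Int.emod_lt_of_pos _ hm, x * w + u * x / m * c, ?_⟩
  rw [Int.emod_def]
  linear_combination -x * huw

def posReps (u v n : ℕ) : Set (ℕ × ℕ) :=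
  {p | 1 ≤ p.1 ∧ 1 ≤ p.2 ∧ n = p.2 * u + p.1 * v}

section PosReps

variable {u v n : ℕ}

theorem mem_posReps_mul_iff {β w a b : ℕ} :
    (b, a) ∈ posReps u (β * w) n ↔ 1 ≤ b ∧ 1 ≤ a ∧ n = a * u + β * b * w := by
  simp only [posReps, Set.mem_ofPred_eq, mul_assoc, mul_left_comm b]

theorem exists_eq_add_mul_of_mul_add_mul_eq {a b a₀ b₀ : ℕ} (hu : 0 < u) (huv : Nat.Coprime u v)
    (h : a * u + b * v = a₀ * u + b₀ * v) (hb : b₀ ≤ b) :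
    ∃ t, b = b₀ + t * u ∧ a₀ = a + t * v := by
  obtain ⟨c, rfl⟩ := Nat.exists_eq_add_of_le hb
  have hc : a * u + c * v = a₀ * u := by
    apply Nat.add_right_cancel (m := b₀ * v)
    rw [← h]; ring
  have hcv : c * v = (a₀ - a) * u := by
    rw [Nat.sub_mul]; exact Nat.eq_sub_of_add_eq' hc
  obtain ⟨t, rfl⟩ := huv.dvd_of_dvd_mul_right (Dvd.intro_left _ hcv.symm)
  refine ⟨t, by ring, Nat.eq_of_mul_eq_mul_right hu ?_⟩
  rw [← hc]; ring

theorem posReps_fst_le_of_minimal {b₀ a₀ : ℕ} (hu : 0 < u) (h₀ : (b₀, a₀) ∈ posReps u v n)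
    (hmin : ∀ p ∈ posReps u v n, b₀ ≤ p.1) : b₀ ≤ u := by
  by_contra! hlt
  obtain ⟨-, ha₀, hn⟩ := h₀
  have hshift : (b₀ - u, a₀ + v) ∈ posReps u v n := by
    refine ⟨by omega, by omega, ?_⟩
    rw [hn]; zify [hlt.le]; ring
  exact absurd (hmin _ hshift) (by simp only; omega)

theorem ncard_posReps_le_of_minimal {b₀ a₀ K : ℕ} (hu : 0 < u) (huv : Nat.Coprime u v)
    (h₀ : (b₀, a₀) ∈ posReps u v n) (hmin : ∀ p ∈ posReps u v n, b₀ ≤ p.1)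
    (hK : a₀ ≤ K * v) : (posReps u v n).ncard ≤ K := by
  have hsub : posReps u v n ⊆
      (Finset.range K).image (fun t => (b₀ + t * u, a₀ - t * v)) := by
    rintro ⟨b, a⟩ hp
    obtain ⟨t, rfl, ha₀⟩ := exists_eq_add_mul_of_mul_add_mul_eq hu huv
      (hp.2.2.symm.trans h₀.2.2) (hmin _ hp)
    have ht : t * v < K * v := by have := hp.2.1; simp only at this; omega
    simp only [Finset.coe_image, Finset.coe_range, Set.mem_image, Set.mem_Iio]
    exact ⟨t, lt_of_mul_lt_mul_right' ht, by simp only at ha₀; simp [ha₀]⟩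
  refine (Set.ncard_le_ncard hsub).trans ?_
  rw [Set.ncard_coe_finset]
  exact Finset.card_image_le.trans (Finset.card_range K).le

end PosReps

theorem posReps_nonempty_of_large {α β P Q R n a b : ℕ} (hβ : 0 < β) (hαβ : Nat.Coprime α β)
    (hPβ : Nat.Coprime P β) (hP : P = α * Q + β * R) (hRQ : α * R ≤ Q)
    (hba : (b, a) ∈ posReps P (β * Q) n) (hbP : b ≤ P)
    (ha : (α ^ 2 + 2 * β - 1) * (β * Q) < a) :
    (posReps (α * P + β * Q) (β * P) n).Nonempty := by
  obtain ⟨hb, -, hn⟩ := hba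
  have hcop : IsCoprime ((α * P : ℕ) : ℤ) β := Nat.isCoprime_iff_coprime.mpr (hαβ.mul_left hPβ)
  -- `n - (b + j * P) * (α * P + β * Q) = P * (a - α * b - j * (α * P + β * Q))`; choose `j`
  -- so that `β` divides the second factor
  obtain ⟨j, hj0, hjβ, d, hd⟩ :=
    Int.exists_lt_dvd_sub_mul_of_isCoprime (by exact_mod_cast hβ) hcop (a - α * b)
  lift j to ℕ using hj0
  push_cast at hd hjβ
  have hK : (1 : ℤ) + (α ^ 2 + 2 * β - 1) * (β * Q) ≤ a := by
    have h1 : 1 ≤ α ^ 2 + 2 * β := by omega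
    zify [h1] at ha
    omega
  -- with `P = α * Q + β * R`, this is at least `1 + β ^ 2 * (Q - α * R)`
  have hD : 0 < (a : ℤ) - α * b - j * (α * P + β * Q) := by
    have hj : (j : ℤ) * (α * P + β * Q) ≤ (β - 1) * (α * P + β * Q) :=
      mul_le_mul_of_nonneg_right (by omega) (by positivity)
    have hαb : (α : ℤ) * b ≤ α * P :=
      mul_le_mul_of_nonneg_left (by exact_mod_cast hbP) (by positivity)
    have hR : 0 ≤ (β : ℤ) ^ 2 * (Q - α * R) :=
      mul_nonneg (by positivity) (sub_nonneg.mpr (by exact_mod_cast hRQ))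
    subst hP
    push_cast at hj hαb ⊢
    linarith
  have he : 0 < d - j * Q := pos_of_mul_pos_right (a := (β : ℤ)) (by linear_combination hD + hd)
    (by positivity)
  obtain ⟨e, he'⟩ := Int.eq_ofNat_of_zero_le he.le
  refine ⟨(e, b + j * P), by omega, by simp only; omega, ?_⟩
  zify
  rw [hn, ← he']
  push_cast
  linear_combination (P : ℤ) * hd

theorem stmt_15 (α β : ℕ) (hα : 1 ≤ α) (hβ : 1 ≤ β) (hco : Nat.Coprime α β)
    (g : ℕ → ℕ) (hg0 : g 0 = 0) (hg1 : g 1 = 1)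
    (hgrec : ∀ k, g (k + 2) = α * g (k + 1) + β * g k)
    (n s : ℕ) (hs : 2 < s)
    (hrep : ∃ a b : ℕ, 1 ≤ a ∧ 1 ≤ b ∧ n = a * g (s - 1) + β * b * g (s - 2))
    (hmax : ¬ ∃ a' b' : ℕ, 1 ≤ a' ∧ 1 ≤ b' ∧ n = a' * g s + β * b' * g (s - 1)) :
    {p : ℕ × ℕ | 1 ≤ p.1 ∧ 1 ≤ p.2 ∧ n = p.2 * g (s - 1) + β * p.1 * g (s - 2)}.ncard
      ≤ α ^ 2 + 2 * β - 1 := by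
  obtain ⟨k, rfl⟩ : ∃ k, s = k + 3 := ⟨s - 3, by omega⟩
  simp only [show k + 3 - 1 = k + 2 from rfl, show k + 3 - 2 = k + 1 from rfl] at hrep hmax ⊢
  have hS : {p : ℕ × ℕ | 1 ≤ p.1 ∧ 1 ≤ p.2 ∧ n = p.2 * g (k + 2) + β * p.1 * g (k + 1)} =
      posReps (g (k + 2)) (β * g (k + 1)) n :=
    Set.ext fun _ => mem_posReps_mul_iff.symm
  rw [hS]
  have hne : (posReps (g (k + 2)) (β * g (k + 1)) n).Nonempty :=
    let ⟨a, b, ha, hb, hn⟩ := hrep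
    ⟨(b, a), mem_posReps_mul_iff.mpr ⟨hb, ha, hn⟩⟩
  obtain ⟨⟨b₀, a₀⟩, h₀, hmin⟩ : ∃ p ∈ posReps (g (k + 2)) (β * g (k + 1)) n,
      ∀ q ∈ posReps (g (k + 2)) (β * g (k + 1)) n, p.1 ≤ q.1 :=
    ⟨_, Function.argminOn_mem Prod.fst _ hne, fun _ hq => Function.argminOn_le Prod.fst _ hq⟩
  have hPpos := lucas_succ_pos hα hg1 hgrec (k + 1)
  have hPβ := lucas_succ_coprime_right hco hg1 hgrec (k + 1)
  refine ncard_posReps_le_of_minimal hPpos (hPβ.mul_right (lucas_coprime_succ hco hg1 hgrec k))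
    h₀ hmin (not_lt.mp fun ha => hmax ?_)
  obtain ⟨⟨b, a⟩, hba⟩ := posReps_nonempty_of_large hβ hco hPβ (hgrec k)
    (mul_lucas_le_succ hg0 hgrec k) h₀ (posReps_fst_le_of_minimal hPpos h₀ hmin) ha
  rw [← hgrec (k + 1), mem_posReps_mul_iff] at hba
  exact ⟨a, b, hba.2.1, hba.1, hba.2.2⟩
end

section
/- For all n with s = s(n) > 2, one has (1/2)·log_γ(n) − 1 ≤ s(n) ≤ log_γ(n) + 2, where γ = (α + √(α²+4β))/2. -/
/-!
Write `n = a g_{s-1} + β b g_{s-2}` with `a, b ≥ 1`. From below,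
`n ≥ g_{s-1} + β g_{s-2} ≥ γ^{s-2}`. From above, maximality of `s` says that `n` has no
representation `a' g_s + b' (β g_{s-1})` with `a', b' ≥ 1`; since `g_s` and `β g_{s-1}` are
coprime, Sylvester's theorem forces `n ≤ g_s · β g_{s-1} ≤ γ^{s-1} · γ² · γ^{s-2}`. Both estimates
on `g` come from comparing it with the geometric sequence `γ^k`, which satisfies the same
recurrence because `γ² = αγ + β`.
-/

open Real

theorem exists_pos_mul_add_mul_eq_of_mul_lt {x y n : ℕ} (hx : 2 ≤ x) (hy : 1 ≤ y)
    (hco : Nat.Coprime x y) (hn : x * y < n) : ∃ a b : ℕ, 1 ≤ a ∧ 1 ≤ b ∧ n = a * x + b * y := by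
  rcases hy.eq_or_lt with rfl | hy
  · exact ⟨1, n - x, le_rfl, by omega, by omega⟩
  have hxy : x + y ≤ x * y := Nat.add_le_mul hx hy
  have hmem : n - x - y ∈ AddSubmonoid.closure ({x, y} : Set ℕ) := by
    by_contra h
    have := (frobeniusNumber_pair hco hx hy).2 h
    omega
  obtain ⟨a, b, hab⟩ := (AddSubmonoid.mem_closure_pair _ _ _).mp hmem
  refine ⟨a + 1, b + 1, by omega, by omega, ?_⟩
  simp only [smul_eq_mul] at hab
  linarith [Nat.sub_add_cancel (show x + y ≤ n by omega), Nat.sub_sub n x y]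

theorem le_of_recurrence_of_le_of_le {R : Type*} [Semiring R] [PartialOrder R] [IsOrderedRing R]
    {a b : R} (ha : 0 ≤ a) (hb : 0 ≤ b) {u v : ℕ → R}
    (hu : ∀ k, u (k + 2) = a * u (k + 1) + b * u k)
    (hv : ∀ k, v (k + 2) = a * v (k + 1) + b * v k) (h0 : u 0 ≤ v 0) (h1 : u 1 ≤ v 1) :
    ∀ k, u k ≤ v k := by
  intro k
  induction k using Nat.twoStepInduction with
  | zero => exact h0
  | one => exact h1
  | more k ih ih' =>
    rw [hu, hv]
    gcongr

theorem pow_recurrence {R : Type*} [CommSemiring R] {a b γ : R} (hγ : γ ^ 2 = a * γ + b) (k : ℕ) :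
    γ ^ (k + 2) = a * γ ^ (k + 1) + b * γ ^ k := by
  rw [pow_add, hγ]
  ring

section QuadraticRoot

variable {a b : ℝ}

theorem sq_eq_of_eq_quadratic_root (hd : 0 ≤ a ^ 2 + 4 * b) {γ : ℝ}
    (hγ : γ = (a + √(a ^ 2 + 4 * b)) / 2) : γ ^ 2 = a * γ + b := by
  subst hγ
  nlinarith [sq_sqrt hd]

theorem lt_quadratic_root (hb : 0 < b) : a < (a + √(a ^ 2 + 4 * b)) / 2 := by
  have : a < √(a ^ 2 + 4 * b) := lt_sqrt_of_sq_lt (by linarith)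
  linarith

end QuadraticRoot

namespace LucasSequence

variable {α β : ℕ} {g : ℕ → ℕ}

theorem one_le_apply_succ (hα : 1 ≤ α) (hg1 : g 1 = 1)
    (hrec : ∀ k, g (k + 2) = α * g (k + 1) + β * g k) (k : ℕ) : 1 ≤ g (k + 1) := by
  induction k with
  | zero => exact hg1.ge
  | succ k ih =>
    rw [hrec]
    nlinarith

theorem coprime_apply_succ_mul_apply (hco : Nat.Coprime α β) (hg1 : g 1 = 1)
    (hrec : ∀ k, g (k + 2) = α * g (k + 1) + β * g k) (k : ℕ) :
    Nat.Coprime (g (k + 1)) (β * g k) := by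
  induction k with
  | zero => rw [hg1]; exact Nat.coprime_one_left _
  | succ k ih =>
    have hβ : Nat.Coprime (g (k + 2)) β := by
      rw [hrec, Nat.coprime_add_mul_left_left]
      exact hco.mul_left ih.coprime_mul_right_right
    have hg : Nat.Coprime (g (k + 2)) (g (k + 1)) := by
      rw [hrec, add_comm, Nat.coprime_add_mul_right_left]
      exact ih.symm
    exact hβ.mul_right hg

theorem le_mul_of_not_exists_pos_rep (hα : 1 ≤ α) (hβ : 1 ≤ β) (hco : Nat.Coprime α β)
    (hg1 : g 1 = 1) (hrec : ∀ k, g (k + 2) = α * g (k + 1) + β * g k) {n k : ℕ}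
    (h : ¬ ∃ a b : ℕ, 1 ≤ a ∧ 1 ≤ b ∧ n = a * g (k + 3) + β * b * g (k + 2)) :
    n ≤ g (k + 3) * (β * g (k + 2)) := by
  have hpos := one_le_apply_succ hα hg1 hrec
  by_contra! hn
  obtain ⟨a, b, ha, hb, hab⟩ := exists_pos_mul_add_mul_eq_of_mul_lt
    (by rw [hrec]; nlinarith [hpos k, hpos (k + 1)]) (by nlinarith [hpos (k + 1)])
    (coprime_apply_succ_mul_apply hco hg1 hrec (k + 2)) hn
  exact h ⟨a, b, ha, hb, by rw [hab]; ring⟩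

variable {γ : ℝ}

theorem apply_succ_le_pow (hg0 : g 0 = 0) (hg1 : g 1 = 1)
    (hrec : ∀ k, g (k + 2) = α * g (k + 1) + β * g k) (hγ : γ ^ 2 = α * γ + β)
    (hαγ : (α : ℝ) ≤ γ) (k : ℕ) : (g (k + 1) : ℝ) ≤ γ ^ k := by
  refine le_of_recurrence_of_le_of_le (Nat.cast_nonneg α) (Nat.cast_nonneg β)
    (u := fun k ↦ (g (k + 1) : ℝ)) (fun k ↦ ?_) (pow_recurrence hγ) ?_ ?_ k
  · simp only [hrec (k + 1), Nat.cast_add, Nat.cast_mul]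
  · simp [hg1]
  · simp [hrec 0, hg0, hg1, hαγ]

theorem pow_le_apply_succ_add_mul (hg0 : g 0 = 0) (hg1 : g 1 = 1)
    (hrec : ∀ k, g (k + 2) = α * g (k + 1) + β * g k) (hγ : γ ^ 2 = α * γ + β)
    (hγab : γ ≤ α + β) (k : ℕ) : γ ^ k ≤ g (k + 1) + β * g k := by
  refine le_of_recurrence_of_le_of_le (Nat.cast_nonneg α) (Nat.cast_nonneg β)
    (pow_recurrence hγ) (v := fun k ↦ (g (k + 1) : ℝ) + β * g k) (fun k ↦ ?_) ?_ ?_ k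
  · simp only [hrec (k + 1), hrec k, Nat.cast_add, Nat.cast_mul]
    ring
  · simp [hg0, hg1]
  · simpa [hrec 0, hg0, hg1] using hγab

theorem pow_le_pos_rep (hg0 : g 0 = 0) (hg1 : g 1 = 1)
    (hrec : ∀ k, g (k + 2) = α * g (k + 1) + β * g k) (hγ : γ ^ 2 = α * γ + β) (hγ1 : 1 ≤ γ)
    {a b k : ℕ} (ha : 1 ≤ a) (hb : 1 ≤ b) : γ ^ k ≤ ((a * g (k + 1) + β * b * g k : ℕ) : ℝ) := by
  -- `γ > α + β` would give `γ² > αγ + βγ ≥ αγ + β`.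
  have hγab : γ ≤ α + β := by nlinarith
  calc γ ^ k ≤ g (k + 1) + β * g k := pow_le_apply_succ_add_mul hg0 hg1 hrec hγ hγab k
    _ ≤ _ := by
        exact_mod_cast Nat.add_le_add (Nat.le_mul_of_pos_left _ ha)
          (Nat.mul_le_mul_right _ (Nat.le_mul_of_pos_right _ hb))

theorem apply_succ_succ_mul_le_pow (hg0 : g 0 = 0) (hg1 : g 1 = 1)
    (hrec : ∀ k, g (k + 2) = α * g (k + 1) + β * g k) (hγ : γ ^ 2 = α * γ + β)
    (hαγ : (α : ℝ) ≤ γ) (k : ℕ) : (g (k + 2) * (β * g (k + 1)) : ℝ) ≤ γ ^ (2 * k + 3) := by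
  have hγ0 : 0 ≤ γ := (Nat.cast_nonneg α).trans hαγ
  have hsucc := apply_succ_le_pow hg0 hg1 hrec hγ hαγ
  have hβγ : (β : ℝ) ≤ γ ^ 2 := by
    rw [hγ]
    nlinarith
  calc (g (k + 2) * (β * g (k + 1)) : ℝ) ≤ γ ^ (k + 1) * (γ ^ 2 * γ ^ k) :=
        mul_le_mul (hsucc (k + 1)) (mul_le_mul hβγ (hsucc k) (by positivity) (by positivity))
          (by positivity) (pow_nonneg hγ0 _)
    _ = γ ^ (2 * k + 3) := by ring

end LucasSequence

open LucasSequence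

theorem natCast_le_logb_of_pow_le {γ x : ℝ} {k : ℕ} (hγ : 1 < γ) (h : γ ^ k ≤ x) :
    (k : ℝ) ≤ logb γ x := by
  rwa [le_logb_iff_rpow_le hγ ((pow_pos (by linarith) k).trans_le h), rpow_natCast]

theorem logb_le_natCast_of_le_pow {γ x : ℝ} {k : ℕ} (hγ : 1 < γ) (hx : 0 < x) (h : x ≤ γ ^ k) :
    logb γ x ≤ k := by
  rwa [logb_le_iff_le_rpow hγ hx, rpow_natCast]

theorem stmt_16 (α β : ℕ) (hα : 1 ≤ α) (hβ : 1 ≤ β) (hco : Nat.Coprime α β)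
    (g : ℕ → ℕ) (hg0 : g 0 = 0) (hg1 : g 1 = 1)
    (hgrec : ∀ k, g (k + 2) = α * g (k + 1) + β * g k)
    (γ : ℝ) (hγ : γ = (α + Real.sqrt (α ^ 2 + 4 * β)) / 2)
    (n s : ℕ) (hs : 2 < s)
    (hrep : ∃ a b : ℕ, 1 ≤ a ∧ 1 ≤ b ∧ n = a * g (s - 1) + β * b * g (s - 2))
    (hmax : ¬ ∃ a' b' : ℕ, 1 ≤ a' ∧ 1 ≤ b' ∧ n = a' * g s + β * b' * g (s - 1)) :
    (1 / 2) * Real.logb γ n - 1 ≤ (s : ℝ) ∧ (s : ℝ) ≤ Real.logb γ n + 2 := by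
  obtain ⟨m, rfl⟩ : ∃ m, s = m + 3 := ⟨s - 3, by omega⟩
  simp only [show m + 3 - 1 = m + 2 by omega, show m + 3 - 2 = m + 1 by omega] at hrep hmax
  have hγsq : γ ^ 2 = α * γ + β := sq_eq_of_eq_quadratic_root (by positivity) hγ
  have hαγ : (α : ℝ) < γ := hγ ▸ lt_quadratic_root (by exact_mod_cast hβ)
  have hγ1 : 1 < γ := lt_of_le_of_lt (by exact_mod_cast hα) hαγ
  have hlo : γ ^ (m + 1) ≤ n := by
    obtain ⟨a, b, ha, hb, rfl⟩ := hrep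
    exact pow_le_pos_rep hg0 hg1 hgrec hγsq hγ1.le ha hb
  have hhi : (n : ℝ) ≤ γ ^ (2 * (m + 1) + 3) :=
    (Nat.cast_le.mpr (le_mul_of_not_exists_pos_rep hα hβ hco hg1 hgrec hmax)).trans
      (by exact_mod_cast apply_succ_succ_mul_le_pow hg0 hg1 hgrec hγsq hαγ.le (m + 1))
  have hlog_lo := natCast_le_logb_of_pow_le hγ1 hlo
  have hlog_hi := logb_le_natCast_of_le_pow hγ1 ((pow_pos (by linarith) _).trans_le hlo) hhi
  push_cast at hlog_lo hlog_hi ⊢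
  constructor <;> linarith
end

section
/- In the Fibonacci case (α = β = 1), if s(n) > 2 then s(n) ≥ (1/2)·log_φ(n) + 2, where φ is the golden ratio. -/
/-!
If `n` has no representation `a * F_s + b * F_{s-1}` with `a, b ≥ 1`, then, since consecutive
Fibonacci numbers are coprime, the shifted Frobenius (Chicken McNugget) bound gives
`n ≤ F_s * F_{s-1}`. Writing `φ ^ m = F_{m+1} - ψ F_m` bounds this product by `φ ^ (2 * s - 4)`,
and taking `logb φ` gives the claim.
-/

open Real goldenRatio

theorem Nat.exists_pos_mul_add_pos_mul_eq_of_coprime_of_mul_lt {p q n : ℕ} (hpq : p.Coprime q)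
    (h : p * q < n) : ∃ a b : ℕ, 1 ≤ a ∧ 1 ≤ b ∧ n = a * p + b * q := by
  have hpq_le : p + q ≤ p * q + 1 := by
    rcases Nat.eq_zero_or_pos p with rfl | hp
    · simp_all [Nat.coprime_zero_left]
    rcases Nat.eq_zero_or_pos q with rfl | hq
    · simp_all [Nat.coprime_zero_right]
    nlinarith
  obtain ⟨a, b, hab⟩ := Nat.exists_add_mul_eq_of_gcd_dvd_of_mul_pred_le p q (n - p - q)
    (by simp [hpq.gcd_eq_one]) (by grind [Nat.pred_mul, Nat.mul_pred, Nat.pred_eq_sub_one])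
  exact ⟨a + 1, b + 1, by omega, by omega, by grind⟩

theorem fib_add_one_mul_fib_add_two_le_goldenRatio_pow (m : ℕ) :
    (Nat.fib (m + 1) * Nat.fib (m + 2) : ℝ) ≤ φ ^ (2 * m) := by
  have hψ : ψ ≤ -1 / 2 := by
    have : (2 : ℝ) ≤ √5 := by rw [Real.le_sqrt] <;> norm_num
    unfold goldenConj; linarith
  have hF : (0 : ℝ) ≤ Nat.fib m * Nat.fib (m + 1) := by positivity
  -- `φ ^ m = F_{m+1} - ψ F_m`, and `-2ψ ≥ 1` absorbs the cross term `F_m F_{m+1}`.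
  rw [pow_mul', ← fib_succ_sub_goldenConj_mul_fib, Nat.fib_add_two, Nat.cast_add]
  nlinarith [mul_nonneg (by linarith : (0 : ℝ) ≤ -2 * ψ - 1) hF, sq_nonneg (ψ * Nat.fib m)]

theorem stmt_17_general (n s : ℕ) (hs : 2 < s)
    (hmax : ¬ ∃ a' b' : ℕ, 1 ≤ a' ∧ 1 ≤ b' ∧ n = a' * Nat.fib s + b' * Nat.fib (s - 1)) :
    (s : ℝ) ≥ (1 / 2) * Real.logb ((1 + Real.sqrt 5) / 2) n + 2 := by
  obtain ⟨m, rfl⟩ : ∃ m, s = m + 2 := ⟨s - 2, by omega⟩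
  have hn_le : n ≤ Nat.fib (m + 2) * Nat.fib (m + 1) := by
    by_contra! hlt
    exact hmax (Nat.exists_pos_mul_add_pos_mul_eq_of_coprime_of_mul_lt
      (Nat.fib_coprime_fib_succ (m + 1)).symm hlt)
  have hlogb : logb φ n ≤ 2 * m := by
    rcases Nat.eq_zero_or_pos n with rfl | hn
    · simp
    rw [logb_le_iff_le_rpow one_lt_goldenRatio (by exact_mod_cast hn)]
    calc (n : ℝ) ≤ Nat.fib (m + 1) * Nat.fib (m + 2) := by
          rw [mul_comm]; exact_mod_cast hn_le
      _ ≤ φ ^ (2 * m) := fib_add_one_mul_fib_add_two_le_goldenRatio_pow m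
      _ = φ ^ (2 * m : ℝ) := by rw [← rpow_natCast]; push_cast; rfl
  change (1 / 2) * logb φ n + 2 ≤ ((m + 2 : ℕ) : ℝ)
  push_cast
  linarith

theorem stmt_17 (n s : ℕ) (hs : 2 < s)
    (hrep : ∃ a b : ℕ, 1 ≤ a ∧ 1 ≤ b ∧ n = a * Nat.fib (s - 1) + b * Nat.fib (s - 2))
    (hmax : ¬ ∃ a' b' : ℕ, 1 ≤ a' ∧ 1 ≤ b' ∧ n = a' * Nat.fib s + b' * Nat.fib (s - 1)) :
    (s : ℝ) ≥ (1 / 2) * Real.logb ((1 + Real.sqrt 5) / 2) n + 2 :=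
  stmt_17_general n s hs hmax
end

section
/- Let p ≥ 1 be an integer, γ, λ the roots of x² = αx + β, and let d be the smallest integer such that δ := β·γ^{−1}·p − γ·d ≤ α. If 1 ≤ p ≤ ⌈γ²⌉ − 2, then 0 ≤ d ≤ β − 1 and α − γ < δ ≤ α. -/
/-!
Since `γ² = αγ + β`, we have `βγ⁻¹ = γ - α`, so `δ(d) = (γ - α) p - γ d` drops by `γ` at each step
of `d`. Minimality of `d` gives `δ(d - 1) = δ(d) + γ > α`, and a negative `d` would give
`δ(d) ≥ γ > α`. Finally `p ≤ γ² - 1` and `(γ - α)(γ² - 1) = βγ - γ + α` give `δ(β - 1) ≤ α`,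
hence `d ≤ β - 1`.
-/

theorem sq_eq_mul_add_of_eq_add_sqrt {a b γ : ℝ} (hγ : γ = (a + √(a ^ 2 + 4 * b)) / 2)
    (hdisc : 0 ≤ a ^ 2 + 4 * b) : γ ^ 2 = a * γ + b := by
  have hs := Real.sq_sqrt hdisc
  subst hγ
  linear_combination hs / 4

theorem lt_of_eq_add_sqrt {a b γ : ℝ} (hγ : γ = (a + √(a ^ 2 + 4 * b)) / 2) (hb : 0 < b) :
    a < γ := by
  have : a < √(a ^ 2 + 4 * b) :=
    calc a ≤ |a| := le_abs_self a
      _ = √(a ^ 2) := (Real.sqrt_sq_eq_abs a).symm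
      _ < √(a ^ 2 + 4 * b) := Real.sqrt_lt_sqrt (sq_nonneg a) (by linarith)
  linarith

theorem mul_inv_eq_sub_of_sq_eq {a b γ : ℝ} (hγ : γ ^ 2 = a * γ + b) (hγ0 : γ ≠ 0) :
    b * γ⁻¹ = γ - a := by
  field_simp
  linear_combination -hγ

theorem nonneg_of_sub_mul_le {a c γ : ℝ} {d : ℤ} (hc : 0 ≤ c) (hγ0 : 0 < γ) (haγ : a < γ)
    (h : c - γ * d ≤ a) : 0 ≤ d := by
  by_contra! hd
  have hd1 : (d : ℝ) ≤ -1 := by exact_mod_cast Int.le_sub_one_of_lt hd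
  nlinarith

theorem lt_sub_mul_of_forall_le {a c γ : ℝ} {d : ℤ}
    (hmin : ∀ d' : ℤ, c - γ * d' ≤ a → d ≤ d') : a - γ < c - γ * d := by
  by_contra! h
  have := hmin (d - 1) (by push_cast; linarith)
  omega

theorem mul_inv_mul_sub_mul_sub_one_le {a b γ p : ℝ} (hγ : γ ^ 2 = a * γ + b) (haγ : a ≤ γ)
    (hγ0 : 0 < γ) (hp : p ≤ γ ^ 2 - 1) : b * γ⁻¹ * p - γ * (b - 1) ≤ a := by
  rw [mul_inv_eq_sub_of_sq_eq hγ hγ0.ne']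
  have : (γ - a) * p ≤ (γ - a) * (γ ^ 2 - 1) := mul_le_mul_of_nonneg_left hp (by linarith)
  linear_combination this + γ * hγ

theorem stmt_18_general (α β : ℕ) (hβ : 1 ≤ β)
    (γ : ℝ) (hγ : γ = (α + Real.sqrt (α ^ 2 + 4 * β)) / 2)
    (p : ℕ) (hp2 : (p : ℤ) ≤ ⌈γ ^ 2⌉ - 2)
    (d : ℤ) (hd : (β : ℝ) * γ⁻¹ * p - γ * d ≤ α)
    (hdmin : ∀ d' : ℤ, (β : ℝ) * γ⁻¹ * p - γ * d' ≤ α → d ≤ d') :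
    0 ≤ d ∧ d ≤ (β : ℤ) - 1 ∧
      (α : ℝ) - γ < (β : ℝ) * γ⁻¹ * p - γ * d ∧ (β : ℝ) * γ⁻¹ * p - γ * d ≤ α := by
  have hγsq : γ ^ 2 = α * γ + β := sq_eq_mul_add_of_eq_add_sqrt hγ (by positivity)
  have hαγ : (α : ℝ) < γ := lt_of_eq_add_sqrt hγ (by exact_mod_cast hβ)
  have hγ0 : 0 < γ := hαγ.trans_le' (Nat.cast_nonneg α)
  have hp : (p : ℝ) ≤ γ ^ 2 - 1 := by
    have hceil : ((⌈γ ^ 2⌉ : ℤ) : ℝ) < γ ^ 2 + 1 := Int.ceil_lt_add_one _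
    have : (p : ℝ) ≤ ((⌈γ ^ 2⌉ : ℤ) : ℝ) - 2 := by exact_mod_cast hp2
    linarith
  refine ⟨nonneg_of_sub_mul_le (by positivity) hγ0 hαγ hd, hdmin _ ?_,
    lt_sub_mul_of_forall_le hdmin, hd⟩
  push_cast
  exact mul_inv_mul_sub_mul_sub_one_le hγsq hαγ.le hγ0 hp

theorem stmt_18 (α β : ℕ) (hα : 1 ≤ α) (hβ : 1 ≤ β) (hco : Nat.Coprime α β)
    (γ : ℝ) (hγ : γ = (α + Real.sqrt (α ^ 2 + 4 * β)) / 2)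
    (p : ℕ) (hp1 : 1 ≤ p) (hp2 : (p : ℤ) ≤ ⌈γ ^ 2⌉ - 2)
    (d : ℤ) (hd : (β : ℝ) * γ⁻¹ * p - γ * d ≤ α)
    (hdmin : ∀ d' : ℤ, (β : ℝ) * γ⁻¹ * p - γ * d' ≤ α → d ≤ d') :
    0 ≤ d ∧ d ≤ (β : ℤ) - 1 ∧
      (α : ℝ) - γ < (β : ℝ) * γ⁻¹ * p - γ * d ∧ (β : ℝ) * γ⁻¹ * p - γ * d ≤ α :=
  stmt_18_general α β hβ γ hγ p hp2 d hd hdmin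
end
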